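/- Let the finite group G be an internal central product of subgroups H and K amalgamating D (i.e. G = HK, H ∩ K = D and [H,K] = 1). If K is cyclic, the indices |H/D| and |K/D| are coprime, and D ≤ Z^∧(H), then M(G) ≅ M(H). -/

import Mathlib

/-!
Nonabelian tensor square modulo `q` (Conduché–Ellis / Brown–Loday for `q = 0`),
presented by generators `g ⊗ h` and `{(g,g)}` with the defining relations.
-/

namespace QTensor

/-- Generators of the `q`-tensor square: `t g h` stands for `g ⊗ h`,
and `d g` stands for the symbol `{(g,g)}`. -/
inductive Gen (G : Type) : Type
  | t : G → G → Gen G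
  | d : G → Gen G

variable (G : Type) [Group G]

/-- The word `g ⊗ h` in the free group on the generators. -/
def T (g h : G) : FreeGroup (Gen G) := FreeGroup.of (Gen.t g h)

/-- The word `{(g,g)}` in the free group on the generators. -/
def D (g : G) : FreeGroup (Gen G) := FreeGroup.of (Gen.d g)

/-- The word `∏_{i=1}^{q-1} (g⁻¹ ⊗ (^(g^(1-q+i)) g₁)^i)` appearing in relation (4). -/
def relProd (q : ℕ) (g g₁ : G) : FreeGroup (Gen G) :=
  ((List.range (q - 1)).map (fun j =>
    T G g⁻¹ ((g ^ ((1 : ℤ) - (q : ℤ) + (j + 1 : ℕ)) * g₁ *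
      (g ^ ((1 : ℤ) - (q : ℤ) + (j + 1 : ℕ)))⁻¹) ^ (j + 1)))).prod

/-- The defining relations of the `q`-tensor square.  For `q = 0` the symbols
`{(g,g)}` are killed, so that the group is the Brown–Loday nonabelian tensor
square generated by the `g ⊗ h` subject to relations (1) and (2). -/
def rels (q : ℕ) : Set (FreeGroup (Gen G)) :=
  {r | ∃ g g₁ h : G,
      r = T G (g * g₁) h * (T G (g * g₁ * g⁻¹) (g * h * g⁻¹) * T G g h)⁻¹} ∪
  {r | ∃ g h h₁ : G,
      r = T G g (h * h₁) * (T G g h * T G (h * g * h⁻¹) (h * h₁ * h⁻¹))⁻¹} ∪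
  {r | ∃ g g₁ h₁ : G,
      r = D G g * T G g₁ h₁ * (D G g)⁻¹ *
        (T G (g ^ q * g₁ * (g ^ q)⁻¹) (g ^ q * h₁ * (g ^ q)⁻¹))⁻¹} ∪
  {r | ∃ g g₁ : G,
      r = D G (g * g₁) * (D G g * relProd G q g g₁ * D G g₁)⁻¹} ∪
  {r | ∃ g g₁ : G,
      r = D G g * D G g₁ * (D G g)⁻¹ * (D G g₁)⁻¹ * (T G (g ^ q) (g₁ ^ q))⁻¹} ∪
  {r | ∃ g h : G,
      r = D G (g * h * g⁻¹ * h⁻¹) * ((T G g h) ^ q)⁻¹} ∪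
  {r | q = 0 ∧ ∃ g : G, r = D G g}

/-- The nonabelian tensor square modulo `q`, `G ⊗^q G`. -/
def tensorSquare (q : ℕ) : Type := PresentedGroup (rels G q)

instance (q : ℕ) : Group (tensorSquare G q) := by unfold tensorSquare; infer_instance

/-- The element `g ⊗ h` of `G ⊗^q G`. -/
def tmk (q : ℕ) (g h : G) : tensorSquare G q := PresentedGroup.of (Gen.t g h)

/-- The element `{(g,g)}` of `G ⊗^q G`. -/
def dmk (q : ℕ) (g : G) : tensorSquare G q := PresentedGroup.of (Gen.d g)

/-- `∇^q(G)`, the normal closure of the elements `g ⊗ g` in `G ⊗^q G`. -/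
def nabla (q : ℕ) : Subgroup (tensorSquare G q) :=
  Subgroup.normalClosure {x | ∃ g : G, x = tmk G q g g}

instance (q : ℕ) : (nabla G q).Normal := Subgroup.normalClosure_normal

/-- The exterior square modulo `q`, `G ∧^q G = (G ⊗^q G)/∇^q(G)`. -/
def extSquare (q : ℕ) : Type := tensorSquare G q ⧸ nabla G q

instance (q : ℕ) : Group (extSquare G q) := by unfold extSquare; infer_instance

/-- The element `g ∧ h` of `G ∧^q G`. -/
def wmk (q : ℕ) (g h : G) : extSquare G q := QuotientGroup.mk (tmk G q g h)

/-- The image of the symbol `{(g,g)}` in `G ∧^q G`. -/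
def dwmk (q : ℕ) (g : G) : extSquare G q := QuotientGroup.mk (dmk G q g)

/-- The exterior centre variant `Z^∧_q(G) = {g : g ∧ h = 1 for all h}` (as a set). -/
def Zext (q : ℕ) : Set G := {g | ∀ h : G, wmk G q g h = 1}

/-- `E^∧_q(G) = {g ∈ Z^∧_q(G) : {(g,g)} = 1 in G ∧^q G}` (as a set); for `q = 0`
the second condition is automatic, so `E^∧_0(G) = Z^∧(G)`. -/
def Eext (q : ℕ) : Set G := {g | (∀ h : G, wmk G q g h = 1) ∧ dwmk G q g = 1}

/-- The subgroup `G^q[G,G]` generated by all `q`-th powers and all commutators. -/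
def qPowComm (q : ℕ) : Subgroup G :=
  Subgroup.closure ({x | ∃ g : G, x = g ^ q} ∪ {x | ∃ a b : G, x = a * b * a⁻¹ * b⁻¹})

theorem pow_mem_qPowComm (q : ℕ) (g : G) : g ^ q ∈ qPowComm G q :=
  Subgroup.subset_closure (Or.inl ⟨g, rfl⟩)

theorem commutator_mem_qPowComm (q : ℕ) (a b : G) :
    a * b * a⁻¹ * b⁻¹ ∈ qPowComm G q :=
  Subgroup.subset_closure (Or.inr ⟨a, b, rfl⟩)

open scoped commutatorElement in
theorem mem_commutator (a b : G) : ⁅a, b⁆ ∈ commutator G :=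
  Subgroup.commutator_mem_commutator (Subgroup.mem_top a) (Subgroup.mem_top b)

/-- `M₀^q(G)`: the subgroup of `G ∧^q G` generated by the `x ∧ y` with `[x,y] = 1`.
(It is contained in the `q`-Schur multiplier `M^q(G)`.) -/
def M0 (q : ℕ) : Subgroup (extSquare G q) :=
  Subgroup.closure {x | ∃ a b : G, a * b = b * a ∧ x = wmk G q a b}

/-- `M̂₀^q(G)`: the subgroup of `G ∧^q G` generated by the `x ∧ y` with `[x,y] = 1`
together with the `{(g,g)}` with `g^q = 1`. -/
def M0hat (q : ℕ) : Subgroup (extSquare G q) :=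
  Subgroup.closure
    ({x | ∃ a b : G, a * b = b * a ∧ x = wmk G q a b} ∪
     {x | ∃ g : G, g ^ q = 1 ∧ x = dwmk G q g})

/-- A group `Q` is capable if `Q ≅ E/Z(E)` for some group `E`. -/
def Capable (Q : Type) [Group Q] : Prop :=
  ∃ (E : Type) (_ : Group E), Nonempty (Q ≃* E ⧸ Subgroup.center E)

end QTensor

/-!
Because `K` is central, every `g ∈ G` has an `H`-component `σ(g)`, unique modulo
`H ∩ K = D`, and since `D ≤ Z^∧(H)` the assignment `g ∧ g' ↦ σ(g) ∧ σ(g')` is a well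
defined retraction `G ∧ G → H ∧ H` of the map induced by `H ≤ G`. It is an inverse as soon
as `K ≤ Z^∧(G)`, which is where the hypotheses enter: `K` cyclic and central gives
`K ∧ K = 1`, hence `D ≤ Z^∧(G)`; for `h ∈ H`, `k ∈ K` the element `h ∧ k` is then killed by
`|H : D|` and by `|K : D|` (bilinearity in the central argument), so it is trivial. The
isomorphism commutes with the commutator maps and so restricts to `M(G) ≅ M(H)`.
-/

theorem MonoidHom.nonempty_ker_mulEquiv_of_comp_eq {A B C C' : Type*} [Group A] [Group B]
    [Group C] [Group C'] (e : A ≃* B) (f : A →* C) (g : B →* C') (j : C →* C')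
    (hj : Function.Injective j) (hcomm : g.comp (e : A →* B) = j.comp f) :
    Nonempty (g.ker ≃* f.ker) :=
  ⟨(e.symm.subgroupMap g.ker).trans (MulEquiv.subgroupCongr (by
    rw [← MonoidHom.ker_comp_mulEquiv, hcomm, MonoidHom.ker_comp_of_injective _ _ hj]))⟩

namespace QTensor

open Subgroup

variable {A : Type} [Group A]

section Relations

variable (q : ℕ)

lemma mk_eq_one_of_mem_rels {r : FreeGroup (Gen A)} (hr : r ∈ rels A q) :
    PresentedGroup.mk (rels A q) r = 1 :=
  (QuotientGroup.eq_one_iff r).mpr (subset_normalClosure hr)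

lemma wmk_mul_left (g g₁ h : A) :
    wmk A q (g * g₁) h = wmk A q (g * g₁ * g⁻¹) (g * h * g⁻¹) * wmk A q g h := by
  have hr := mk_eq_one_of_mem_rels q
    (Or.inl (Or.inl (Or.inl (Or.inl (Or.inl (Or.inl ⟨g, g₁, h, rfl⟩))))))
  rw [map_mul, map_inv, mul_inv_eq_one, map_mul] at hr
  exact (congrArg (QuotientGroup.mk' (nabla A q)) hr).trans (map_mul _ _ _)

lemma wmk_mul_right (g h h₁ : A) :
    wmk A q g (h * h₁) = wmk A q g h * wmk A q (h * g * h⁻¹) (h * h₁ * h⁻¹) := by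
  have hr := mk_eq_one_of_mem_rels q
    (Or.inl (Or.inl (Or.inl (Or.inl (Or.inl (Or.inr ⟨g, h, h₁, rfl⟩))))))
  rw [map_mul, map_inv, mul_inv_eq_one, map_mul] at hr
  exact (congrArg (QuotientGroup.mk' (nabla A q)) hr).trans (map_mul _ _ _)

lemma wmk_self (g : A) : wmk A q g g = 1 :=
  (QuotientGroup.eq_one_iff _).mpr (subset_normalClosure ⟨g, rfl⟩)

lemma wmk_one_right (g : A) : wmk A q g 1 = 1 := by
  simpa using wmk_mul_right q g 1 1

lemma wmk_one_left (h : A) : wmk A q 1 h = 1 := by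
  simpa using wmk_mul_left q 1 1 h

lemma dwmk_eq_one (g : A) : dwmk A 0 g = 1 :=
  congrArg (QuotientGroup.mk (s := nabla A 0)) (mk_eq_one_of_mem_rels 0 (Or.inr ⟨rfl, g, rfl⟩))

end Relations

section Lift

variable {M : Type*} [Group M]

def Gen.valuePairing (f : A → A → M) : Gen A → M
  | .t g h => f g h
  | .d _ => 1

variable {f : A → A → M}
  (hmul_left : ∀ g g₁ h, f (g * g₁) h = f (g * g₁ * g⁻¹) (g * h * g⁻¹) * f g h)
  (hmul_right : ∀ g h h₁, f g (h * h₁) = f g h * f (h * g * h⁻¹) (h * h₁ * h⁻¹))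
  (hself : ∀ g, f g g = 1)
include hmul_left hmul_right hself

lemma lift_valuePairing_of_mem_rels :
    ∀ r ∈ rels A 0, FreeGroup.lift (Gen.valuePairing f) r = 1 := by
  rintro r ((((((⟨g, g₁, h, rfl⟩ | ⟨g, h, h₁, rfl⟩) | ⟨g, g₁, h₁, rfl⟩) | ⟨g, g₁, rfl⟩) |
    ⟨g, g₁, rfl⟩) | ⟨g, h, rfl⟩) | ⟨-, g, rfl⟩)
  · simp only [T, Gen.valuePairing, map_mul, map_inv, FreeGroup.lift_apply_of, mul_inv_eq_one]
    exact hmul_left g g₁ h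
  · simp only [T, Gen.valuePairing, map_mul, map_inv, FreeGroup.lift_apply_of, mul_inv_eq_one]
    exact hmul_right g h h₁
  all_goals simp [T, D, Gen.valuePairing, relProd, hself]

def extSquareLift : extSquare A 0 →* M :=
  let F := PresentedGroup.toGroup (lift_valuePairing_of_mem_rels hmul_left hmul_right hself)
  QuotientGroup.lift (nabla A 0) F <| normalClosure_le_normal (N := F.ker) <| by
    rintro _ ⟨g, rfl⟩
    exact (PresentedGroup.toGroup.of _).trans (hself g)

lemma extSquareLift_wmk (g h : A) :
    extSquareLift hmul_left hmul_right hself (wmk A 0 g h) = f g h :=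
  PresentedGroup.toGroup.of (lift_valuePairing_of_mem_rels hmul_left hmul_right hself)

end Lift

lemma extSquare_hom_ext {M : Type*} [Group M] {f₁ f₂ : extSquare A 0 →* M}
    (h : ∀ g g' : A, f₁ (wmk A 0 g g') = f₂ (wmk A 0 g g')) : f₁ = f₂ :=
  QuotientGroup.monoidHom_ext _ <| PresentedGroup.ext fun
    | .t g g' => h g g'
    | .d g => (congrArg f₁ (dwmk_eq_one g)).trans
        ((map_one f₁).trans ((map_one f₂).symm.trans (congrArg f₂ (dwmk_eq_one g).symm)))

def extSquareMap {B : Type} [Group B] (f : A →* B) : extSquare A 0 →* extSquare B 0 :=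
  extSquareLift (f := fun g h => wmk B 0 (f g) (f h))
    (fun g g₁ h => by simpa using wmk_mul_left 0 (f g) (f g₁) (f h))
    (fun g h h₁ => by simpa using wmk_mul_right 0 (f g) (f h) (f h₁))
    (fun g => wmk_self 0 (f g))

lemma extSquareMap_wmk {B : Type} [Group B] (f : A →* B) (g h : A) :
    extSquareMap f (wmk A 0 g h) = wmk B 0 (f g) (f h) :=
  extSquareLift_wmk _ _ _ g h

section Center

variable {q : ℕ} {z : A}

lemma conj_by_mem_center (hz : z ∈ center A) (g : A) : z * g * z⁻¹ = g := by
  rw [← mem_center_iff.mp hz g, mul_inv_cancel_right]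

lemma conj_of_mem_center (hz : z ∈ center A) (g : A) : g * z * g⁻¹ = z := by
  rw [mem_center_iff.mp hz g, mul_inv_cancel_right]

lemma wmk_mul_right_of_mem_center (hz : z ∈ center A) (g h : A) :
    wmk A q g (z * h) = wmk A q g z * wmk A q g h := by
  rw [wmk_mul_right, conj_by_mem_center hz, conj_by_mem_center hz]

lemma wmk_zpow_right_of_mem_center (hz : z ∈ center A) (g : A) (n : ℤ) :
    wmk A q g (z ^ n) = wmk A q g z ^ n :=
  let wmkCenter : center A →* extSquare A q :=
    { toFun := fun c => wmk A q g c
      map_one' := wmk_one_right q g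
      map_mul' := fun c c' => wmk_mul_right_of_mem_center c.2 g c' }
  map_zpow wmkCenter ⟨z, hz⟩ n

lemma wmk_pow_right_of_mem_center (hz : z ∈ center A) (g : A) (n : ℕ) :
    wmk A q g (z ^ n) = wmk A q g z ^ n := by
  exact_mod_cast wmk_zpow_right_of_mem_center hz g n

lemma wmk_pow_left_of_mem_center (hz : z ∈ center A) (g : A) (n : ℕ) :
    wmk A q (g ^ n) z = wmk A q g z ^ n := by
  induction n with
  | zero => simpa using wmk_one_left q z
  | succ n ih =>
    rw [pow_succ', wmk_mul_left, conj_of_mem_center hz, (Commute.self_pow g n).eq,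
      mul_inv_cancel_right, ih, pow_succ]

lemma wmk_mul_wmk_of_mem_center (hz : z ∈ center A) (g : A) :
    wmk A q g z * wmk A q z g = 1 := by
  have h := wmk_self q (z * g)
  -- expand `zg ∧ zg` in both arguments
  rwa [wmk_mul_left, conj_by_mem_center hz, conj_by_mem_center hz,
    wmk_mul_right_of_mem_center hz, wmk_mul_right_of_mem_center hz, wmk_self, wmk_self, mul_one,
    one_mul] at h

lemma wmk_eq_inv_of_mem_center (hz : z ∈ center A) (g : A) :
    wmk A q g z = (wmk A q z g)⁻¹ :=
  eq_inv_of_mul_eq_one_left (wmk_mul_wmk_of_mem_center hz g)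

lemma wmk_zpow_zpow_of_mem_center (hz : z ∈ center A) (m n : ℤ) :
    wmk A q (z ^ m) (z ^ n) = 1 := by
  rw [wmk_zpow_right_of_mem_center hz, wmk_eq_inv_of_mem_center hz,
    wmk_zpow_right_of_mem_center hz, wmk_self, one_zpow, inv_one, one_zpow]

section Zext

variable (hz : z ∈ center A) (hzZ : z ∈ Zext A q)
include hz hzZ

lemma wmk_eq_one_of_mem_Zext_right (g : A) : wmk A q g z = 1 := by
  rw [wmk_eq_inv_of_mem_center hz, hzZ g, inv_one]

lemma wmk_mul_left_of_mem_Zext (g h : A) : wmk A q (g * z) h = wmk A q g h := by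
  rw [wmk_mul_left, conj_of_mem_center hz, hzZ, one_mul]

lemma wmk_mul_right_of_mem_Zext (g h : A) : wmk A q g (h * z) = wmk A q g h := by
  rw [mem_center_iff.mp hz h, wmk_mul_right_of_mem_center hz,
    wmk_eq_one_of_mem_Zext_right hz hzZ, one_mul]

end Zext

end Center

section CentralProduct

variable {G : Type} [Group G] {H K : Subgroup G}

lemma le_center_of_commute [IsMulCommutative K] (hHK : ∀ g : G, ∃ h ∈ H, ∃ k ∈ K, g = h * k)
    (hcent : ∀ h ∈ H, ∀ k ∈ K, h * k = k * h) : K ≤ center G := by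
  intro k hk
  refine mem_center_iff.mpr fun g => ?_
  obtain ⟨h, hh, k', hk', rfl⟩ := hHK g
  have hkk' : k' * k = k * k' := congrArg Subtype.val (mul_comm' (⟨k', hk'⟩ : K) ⟨k, hk⟩)
  rw [mul_assoc, hkk', ← mul_assoc, hcent h hh k hk, mul_assoc]

lemma normal_of_le_center (hK : K ≤ center G) : K.Normal :=
  ⟨fun k hk g => by rwa [conj_of_mem_center (hK hk)]⟩

lemma wmk_eq_one_of_isCyclic [IsCyclic K] (hK : K ≤ center G) {q : ℕ} {k k' : G} (hk : k ∈ K)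
    (hk' : k' ∈ K) : wmk G q k k' = 1 := by
  obtain ⟨c, hc⟩ := IsCyclic.exists_generator (α := K)
  obtain ⟨m, hm⟩ := mem_zpowers_iff.mp (hc ⟨k, hk⟩)
  obtain ⟨n, hn⟩ := mem_zpowers_iff.mp (hc ⟨k', hk'⟩)
  rw [show k = (c : G) ^ m by rw [← coe_zpow, hm], show k' = (c : G) ^ n by rw [← coe_zpow, hn]]
  exact wmk_zpow_zpow_of_mem_center (hK c.2) m n

lemma mem_Zext_of_mem_inf [IsCyclic K] (hHK : ∀ g : G, ∃ h ∈ H, ∃ k ∈ K, g = h * k)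
    (hK : K ≤ center G) {d : G} (hdH : d ∈ H) (hdK : d ∈ K)
    (hdZ : (⟨d, hdH⟩ : H) ∈ Zext H 0) : d ∈ Zext G 0 := by
  intro g
  obtain ⟨h, hh, k, hk, rfl⟩ := hHK g
  rw [mem_center_iff.mp (hK hk) h, wmk_mul_right_of_mem_center (hK hk),
    wmk_eq_one_of_isCyclic hK hdK hk, one_mul]
  simpa [extSquareMap_wmk] using congrArg (extSquareMap H.subtype) (hdZ ⟨h, hh⟩)

lemma wmk_eq_one_of_coprime_relIndex {D : Subgroup G} (hK : K ≤ center G) (hDK : D ≤ K)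
    (hDZ : ∀ d ∈ D, d ∈ Zext G 0) (hcop : (D.relIndex H).Coprime (D.relIndex K)) {h k : G}
    (hh : h ∈ H) (hk : k ∈ K) : wmk G 0 h k = 1 := by
  have : D.Normal := normal_of_le_center (hDK.trans hK)
  refine (pow_eq_one_iff_of_coprime hcop).mp ⟨?_, ?_⟩
  · rw [← wmk_pow_left_of_mem_center (hK hk)]
    exact hDZ _ (D.pow_relIndex_mem hh) k
  · rw [← wmk_pow_right_of_mem_center (hK hk)]
    have hd := D.pow_relIndex_mem hk
    exact wmk_eq_one_of_mem_Zext_right (hK (hDK hd)) (hDZ _ hd) h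

lemma mem_Zext_of_mem [IsCyclic K] (hHK : ∀ g : G, ∃ h ∈ H, ∃ k ∈ K, g = h * k)
    (hK : K ≤ center G) (hHKZ : ∀ h ∈ H, ∀ k ∈ K, wmk G 0 h k = 1) {k : G} (hk : k ∈ K) :
    k ∈ Zext G 0 := by
  intro g
  obtain ⟨h, hh, k', hk', rfl⟩ := hHK g
  rw [mem_center_iff.mp (hK hk') h, wmk_mul_right_of_mem_center (hK hk'),
    wmk_eq_one_of_isCyclic hK hk hk', one_mul, ← inv_inv (wmk G 0 k h),
    ← wmk_eq_inv_of_mem_center (hK hk), hHKZ h hh k hk, inv_one]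

end CentralProduct

section Retraction

variable {G : Type} [Group G] {H K : Subgroup G} (hHK : ∀ g : G, ∃ h ∈ H, ∃ k ∈ K, g = h * k)

noncomputable def hComponent (g : G) : H := ⟨(hHK g).choose, (hHK g).choose_spec.1⟩

local notation "σ" => hComponent hHK

lemma hComponent_inv_mul_mem (g : G) : (σ g : G)⁻¹ * g ∈ K := by
  obtain ⟨k, hk, hg⟩ := (hHK g).choose_spec.2
  exact (inv_mul_eq_of_eq_mul hg).symm ▸ hk

lemma mk_hComponent (g : G) : ((σ g : G) : G ⧸ K) = g :=
  QuotientGroup.eq.mpr (hComponent_inv_mul_mem hHK g)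

variable (hK : K ≤ center G) (hHKZ : ∀ a : H, (a : G) ∈ K → a ∈ Zext H 0)
include hK hHKZ

lemma wmk_eq_of_mk_eq {a a' b b' : H} (ha : ((a : G) : G ⧸ K) = (a' : G))
    (hb : ((b : G) : G ⧸ K) = (b' : G)) : wmk H 0 a b = wmk H 0 a' b' := by
  have key : ∀ {x y : H}, ((x : G) : G ⧸ K) = (y : G) →
      x⁻¹ * y ∈ center H ∧ x⁻¹ * y ∈ Zext H 0 := fun {x y} hxy => by
    have hmem : ((x⁻¹ * y : H) : G) ∈ K := QuotientGroup.eq.mp hxy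
    exact ⟨mem_center_iff.mpr fun c => Subtype.ext (mem_center_iff.mp (hK hmem) c), hHKZ _ hmem⟩
  obtain ⟨hac, haZ⟩ := key ha
  obtain ⟨hbc, hbZ⟩ := key hb
  calc wmk H 0 a b = wmk H 0 (a * (a⁻¹ * a')) (b * (b⁻¹ * b')) := by
        rw [wmk_mul_left_of_mem_Zext hac haZ, wmk_mul_right_of_mem_Zext hbc hbZ]
    _ = wmk H 0 a' b' := by simp only [mul_inv_cancel_left]

lemma wmk_hComponent_eq {x y : G} {a b : H} (ha : ((a : G) : G ⧸ K) = x)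
    (hb : ((b : G) : G ⧸ K) = y) :
    wmk H 0 (σ x) (σ y) = wmk H 0 a b :=
  wmk_eq_of_mk_eq hK hHKZ ((mk_hComponent hHK x).trans ha.symm)
    ((mk_hComponent hHK y).trans hb.symm)

noncomputable def extSquareRetraction : extSquare G 0 →* extSquare H 0 :=
  extSquareLift (f := fun g g' => wmk H 0 (σ g) (σ g'))
    (fun g g₁ h => by
      have := normal_of_le_center hK
      rw [wmk_hComponent_eq hHK hK hHKZ (a := σ g * σ g₁) (b := σ h) ?_ ?_,
        wmk_hComponent_eq hHK hK hHKZ (a := σ g * σ g₁ * (σ g)⁻¹)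
          (b := σ g * σ h * (σ g)⁻¹) ?_ ?_]
      · exact wmk_mul_left 0 _ _ _
      all_goals simp [mk_hComponent])
    (fun g h h₁ => by
      have := normal_of_le_center hK
      rw [wmk_hComponent_eq hHK hK hHKZ (a := σ g) (b := σ h * σ h₁) ?_ ?_,
        wmk_hComponent_eq hHK hK hHKZ (x := h * g * h⁻¹) (a := σ h * σ g * (σ h)⁻¹)
          (b := σ h * σ h₁ * (σ h)⁻¹) ?_ ?_]
      · exact wmk_mul_right 0 _ _ _
      all_goals simp [mk_hComponent])
    (fun g => wmk_self 0 _)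

lemma extSquareRetraction_wmk (g g' : G) :
    extSquareRetraction hHK hK hHKZ (wmk G 0 g g') =
      wmk H 0 (σ g) (σ g') :=
  extSquareLift_wmk _ _ _ g g'

lemma extSquareRetraction_comp_extSquareMap :
    (extSquareRetraction hHK hK hHKZ).comp (extSquareMap H.subtype) = MonoidHom.id _ :=
  extSquare_hom_ext fun a b => by
    simp [extSquareMap_wmk, extSquareRetraction_wmk, wmk_hComponent_eq hHK hK hHKZ rfl rfl]

lemma extSquareMap_comp_extSquareRetraction (hKZ : ∀ k ∈ K, k ∈ Zext G 0) :
    (extSquareMap H.subtype).comp (extSquareRetraction hHK hK hHKZ) = MonoidHom.id _ :=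
  extSquare_hom_ext fun g g' => by
    have hσ := hComponent_inv_mul_mem hHK
    simp only [MonoidHom.comp_apply, extSquareRetraction_wmk, extSquareMap_wmk, coe_subtype,
      MonoidHom.id_apply]
    calc wmk G 0 (σ g) (σ g')
        = wmk G 0 (σ g * ((σ g : G)⁻¹ * g)) (σ g' * ((σ g' : G)⁻¹ * g')) := by
          rw [wmk_mul_left_of_mem_Zext (hK (hσ g)) (hKZ _ (hσ g)),
            wmk_mul_right_of_mem_Zext (hK (hσ g')) (hKZ _ (hσ g'))]
      _ = wmk G 0 g g' := by simp only [mul_inv_cancel_left]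

end Retraction

end QTensor

open QTensor in
theorem schurMultiplier_iso_of_centralProduct_general (G : Type) [Group G]
    (H K D : Subgroup G)
    (ηG : extSquare G 0 →* G)
    (hηG : ∀ g h : G, ηG (wmk G 0 g h) = g * h * g⁻¹ * h⁻¹)
    (ηH : extSquare H 0 →* H)
    (hηH : ∀ a b : H, ηH (wmk (↥H) 0 a b) = a * b * a⁻¹ * b⁻¹)
    -- G is the internal central product of H and K amalgamating D:
    (hHK : ∀ g : G, ∃ h ∈ H, ∃ k ∈ K, g = h * k)
    (hD : H ⊓ K = D)
    (hcent : ∀ h ∈ H, ∀ k ∈ K, h * k = k * h)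
    -- hypotheses:
    (hcyc : IsCyclic K)
    (hcop : Nat.Coprime (D.relIndex H) (D.relIndex K))
    (hDZ : ∀ x : H, (x : G) ∈ D → x ∈ Zext (↥H) 0) :
    Nonempty (ηG.ker ≃* ηH.ker) := by
  subst hD
  have hK : K ≤ Subgroup.center G := le_center_of_commute hHK hcent
  have hHKZ : ∀ a : H, (a : G) ∈ K → a ∈ Zext H 0 := fun a ha => hDZ a ⟨a.2, ha⟩
  have hDZG : ∀ d ∈ H ⊓ K, d ∈ Zext G 0 := fun d hd =>
    mem_Zext_of_mem_inf hHK hK hd.1 hd.2 (hHKZ ⟨d, hd.1⟩ hd.2)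
  have hKZ : ∀ k ∈ K, k ∈ Zext G 0 := fun k =>
    mem_Zext_of_mem hHK hK fun _ hh _ hk =>
      wmk_eq_one_of_coprime_relIndex hK inf_le_right hDZG hcop hh hk
  let e := (extSquareMap H.subtype).toMulEquiv (extSquareRetraction hHK hK hHKZ)
    (extSquareRetraction_comp_extSquareMap hHK hK hHKZ)
    (extSquareMap_comp_extSquareRetraction hHK hK hHKZ hKZ)
  refine MonoidHom.nonempty_ker_mulEquiv_of_comp_eq e ηH ηG H.subtype H.subtype_injective ?_
  exact extSquare_hom_ext fun a b => by simp [e, extSquareMap_wmk, hηG, hηH]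

open QTensor in
/-- If the finite group `G` is an internal central product of `H` and `K`
amalgamating `D`, with `K` cyclic, `(|H/D|, |K/D|) = 1` and `D ≤ Z^∧(H)`,
then `M(G) ≅ M(H)`. -/
theorem schurMultiplier_iso_of_centralProduct (G : Type) [Group G] [Finite G]
    (H K D : Subgroup G)
    (ηG : extSquare G 0 →* G)
    (hηG : ∀ g h : G, ηG (wmk G 0 g h) = g * h * g⁻¹ * h⁻¹)
    (ηH : extSquare H 0 →* H)
    (hηH : ∀ a b : H, ηH (wmk (↥H) 0 a b) = a * b * a⁻¹ * b⁻¹)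
    -- G is the internal central product of H and K amalgamating D:
    (hHK : ∀ g : G, ∃ h ∈ H, ∃ k ∈ K, g = h * k)
    (hD : H ⊓ K = D)
    (hcent : ∀ h ∈ H, ∀ k ∈ K, h * k = k * h)
    -- hypotheses:
    (hcyc : IsCyclic K)
    (hcop : Nat.Coprime (D.relIndex H) (D.relIndex K))
    (hDZ : ∀ x : H, (x : G) ∈ D → x ∈ Zext (↥H) 0) :
    Nonempty (ηG.ker ≃* ηH.ker) :=
  schurMultiplier_iso_of_centralProduct_general G H K D ηG hηG ηH hηH hHK hD hcent hcyc hcop hDZ
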